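/- Under the faithfulness assumption, two nodes X and Y in a Bayesian network are adjacent in the DAG if and only if there is no subset Z ⊆ V \ {X, Y} such that X and Y are conditionally independent given Z. -/

import Mathlib

open scoped BigOperators
open Classical

variable {V S : Type*} [Fintype V] [DecidableEq V] [Fintype S] [DecidableEq S]

/-- `edgeOf pa a b` means there is a directed edge `a → b`, i.e. `a` is a parent of `b`. -/
def edgeOf (pa : V → Finset V) (a b : V) : Prop := a ∈ pa b

/-- The parent assignment `pa` describes a DAG: no directed cycles. -/
def AcyclicParents (pa : V → Finset V) : Prop :=
  ∀ v : V, ¬ Relation.TransGen (edgeOf pa) v v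

/-- `P` is a probability mass function over joint configurations. -/
def IsPMF (P : (V → S) → ℝ) : Prop :=
  (∀ f, 0 ≤ P f) ∧ ∑ f : V → S, P f = 1

/-- Probability of an event under `P`. -/
noncomputable def pr (P : (V → S) → ℝ) (A : (V → S) → Prop) : ℝ :=
  ∑ f : V → S, if A f then P f else 0

/-- `g` agrees with `f` on the set of nodes `Z`. -/
def agreesOn (Z : Finset V) (g f : V → S) : Prop := ∀ j ∈ Z, g j = f j

/-- Local directed Markov property: each node is conditionally independent of any
set of its non-descendants given its parent set. -/
def LocalMarkov (P : (V → S) → ℝ) (pa : V → Finset V) : Prop :=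
  ∀ (i : V) (f : V → S) (W : Finset V),
    (∀ j ∈ W, ¬ Relation.ReflTransGen (edgeOf pa) i j) →
    pr P (fun g => g i = f i ∧ agreesOn W g f ∧ agreesOn (pa i) g f) *
        pr P (fun g => agreesOn (pa i) g f) =
      pr P (fun g => g i = f i ∧ agreesOn (pa i) g f) *
        pr P (fun g => agreesOn W g f ∧ agreesOn (pa i) g f)

/-- Conditional independence of nodes `x` and `y` given the node set `Z` under `P`:
`P(X=x', Y=y', Z=z') · P(Z=z') = P(X=x', Z=z') · P(Y=y', Z=z')` for all values. -/
def CondIndepOn (P : (V → S) → ℝ) (x y : V) (Z : Finset V) : Prop :=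
  ∀ f : V → S,
    pr P (fun g => g x = f x ∧ g y = f y ∧ agreesOn Z g f) *
        pr P (fun g => agreesOn Z g f) =
      pr P (fun g => g x = f x ∧ agreesOn Z g f) *
        pr P (fun g => g y = f y ∧ agreesOn Z g f)

/-- `a` and `b` are adjacent: there is an edge between them in some direction. -/
def adjacent (pa : V → Finset V) (a b : V) : Prop := a ∈ pa b ∨ b ∈ pa a

/-- `l` is an (undirected) path from `x` to `y` in the DAG: a duplicate-free list of
vertices starting at `x`, ending at `y`, with consecutive vertices adjacent. -/
def IsPath (pa : V → Finset V) (x y : V) (l : List V) : Prop :=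
  l.Chain' (adjacent pa) ∧ l.head? = some x ∧ l.getLast? = some y ∧
    l.Nodup ∧ 2 ≤ l.length

/-- The path `l` is blocked by `Z`: some consecutive triple `a, b, c` on `l` is either
a non-collider (chain or fork) with `b ∈ Z`, or a collider `a → b ← c` with `b ∉ Z`
and no descendant of `b` in `Z`. -/
def Blocked (pa : V → Finset V) (Z : Finset V) (l : List V) : Prop :=
  ∃ a b c : V, [a, b, c] <:+: l ∧
    ((¬ (a ∈ pa b ∧ c ∈ pa b) ∧ b ∈ Z) ∨
      ((a ∈ pa b ∧ c ∈ pa b) ∧ b ∉ Z ∧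
        ∀ d, Relation.ReflTransGen (edgeOf pa) b d → d ∉ Z))

/-- `x` and `y` are d-separated by `Z`: every path between them is blocked by `Z`. -/
def DSep (pa : V → Finset V) (Z : Finset V) (x y : V) : Prop :=
  ∀ l : List V, IsPath pa x y l → Blocked pa Z l

/-- Faithfulness: conditional independence in `P` holds exactly for the triples
that are d-separated in the DAG. -/
def Faithful (P : (V → S) → ℝ) (pa : V → Finset V) : Prop :=
  ∀ (x y : V) (Z : Finset V), x ≠ y → x ∉ Z → y ∉ Z →
    (CondIndepOn P x y Z ↔ DSep pa Z x y)

/-! If `x` and `y` are adjacent, the two-vertex path `[x, y]` has no interior vertex, so no set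
blocks it and faithfulness forbids conditional independence. If they are not adjacent, one of
them, say `y`, is not an ancestor of the other, and the parents of `y` d-separate them: a path
leaving `y` through a parent is blocked at that parent, while a path leaving `y` through a child
must turn back towards the non-descendant `x`, and does so at a collider among the descendants
of `y`, none of which is a parent of `y`. -/

section

omit [Fintype V] [DecidableEq V]

variable {pa : V → Finset V}

theorem AcyclicParents.notMem_parents_of_reflTransGen (hdag : AcyclicParents pa) {y d : V}
    (hyd : Relation.ReflTransGen (edgeOf pa) y d) : d ∉ pa y :=
  fun hdy => hdag y (.tail' hyd hdy)

theorem AcyclicParents.eq_of_reflTransGen (hdag : AcyclicParents pa) {x y : V}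
    (hxy : Relation.ReflTransGen (edgeOf pa) x y) (hyx : Relation.ReflTransGen (edgeOf pa) y x) :
    x = y := by
  rcases hxy.cases_head with rfl | ⟨z, hxz, hzy⟩
  · rfl
  · exact absurd (hzy.trans hyx) fun hzx => hdag x (.head' hxz hzx)

theorem adjacent_comm {a b : V} : adjacent pa a b ↔ adjacent pa b a :=
  or_comm

theorem IsPath.reverse {x y : V} {l : List V} (hl : IsPath pa x y l) :
    IsPath pa y x l.reverse := by
  obtain ⟨hchain, hhead, hlast, hnodup, hlen⟩ := hl
  refine ⟨?_, by rwa [List.head?_reverse], by rwa [List.getLast?_reverse],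
    List.nodup_reverse.mpr hnodup, by rwa [List.length_reverse]⟩
  exact List.isChain_reverse.mpr (hchain.imp fun _ _ h => adjacent_comm.mp h)

theorem Blocked.reverse {Z : Finset V} {l : List V} (hl : Blocked pa Z l) :
    Blocked pa Z l.reverse := by
  obtain ⟨a, b, c, habc, hblock⟩ := hl
  refine ⟨c, b, a, List.reverse_infix.mpr habc, ?_⟩
  simpa only [and_comm (a := c ∈ pa b)] using hblock

theorem DSep.symm {Z : Finset V} {x y : V} (h : DSep pa Z x y) : DSep pa Z y x :=
  fun l hl => by simpa using (h l.reverse hl.reverse).reverse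

theorem not_dsep_of_adjacent {Z : Finset V} {x y : V} (hxy : x ≠ y) (hadj : adjacent pa x y) :
    ¬ DSep pa Z x y := by
  intro h
  have hpath : IsPath pa x y [x, y] :=
    ⟨List.isChain_pair.mpr hadj, rfl, rfl, by simp [hxy], le_rfl⟩
  obtain ⟨a, b, c, habc, -⟩ := h _ hpath
  simpa using habc.length_le

theorem exists_descendant_collider {x y : V} (hyx : ¬ Relation.ReflTransGen (edgeOf pa) y x) :
    ∀ (t : List V) (p u : V), p ∈ pa u → Relation.ReflTransGen (edgeOf pa) y u →
      (p :: u :: t).IsChain (adjacent pa) → (p :: u :: t).getLast? = some x →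
      ∃ a b c : V, [a, b, c] <:+: p :: u :: t ∧ (a ∈ pa b ∧ c ∈ pa b) ∧
        Relation.ReflTransGen (edgeOf pa) y b
  | [], _, u, _, hyu, _, hlast => by
    obtain rfl : u = x := by simpa using hlast
    exact absurd hyu hyx
  | q :: t, p, u, hpu, hyu, hchain, hlast => by
    obtain ⟨-, hchain⟩ := List.isChain_cons_cons.mp hchain
    by_cases huq : u ∈ pa q
    · obtain ⟨a, b, c, habc, hcol⟩ :=
        exists_descendant_collider hyx t u q huq (hyu.tail huq) hchain (by simpa using hlast)
      exact ⟨a, b, c, habc.trans (List.suffix_cons p _).isInfix, hcol⟩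
    · have hqu : q ∈ pa u := (List.isChain_cons_cons.mp hchain).1.resolve_left huq
      exact ⟨p, u, q, ⟨[], t, rfl⟩, ⟨hpu, hqu⟩, hyu⟩

theorem dsep_parents_of_not_adjacent (hdag : AcyclicParents pa) {x y : V}
    (hnadj : ¬ adjacent pa y x) (hyx : ¬ Relation.ReflTransGen (edgeOf pa) y x) :
    DSep pa (pa y) y x := by
  rintro (_ | ⟨y', _ | ⟨w, s⟩⟩) ⟨hchain, hhead, hlast, -, hlen⟩
  · simp at hlen
  · simp at hlen
  obtain rfl : y = y' := (Option.some.inj hhead).symm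
  rcases (List.isChain_cons_cons.mp hchain).1 with hyw | hwy
  · obtain ⟨a, b, c, habc, hcol, hyb⟩ :=
      exists_descendant_collider hyx s y w hyw (.single hyw) hchain hlast
    exact ⟨a, b, c, habc, .inr ⟨hcol, hdag.notMem_parents_of_reflTransGen hyb,
      fun d hbd => hdag.notMem_parents_of_reflTransGen (hyb.trans hbd)⟩⟩
  · rcases s with _ | ⟨w', s⟩
    · obtain rfl : w = x := by simpa using hlast
      exact absurd (.inr hwy) hnadj
    · have hyw : y ∉ pa w := hdag.notMem_parents_of_reflTransGen (.single hwy)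
      exact ⟨y, w, w', ⟨[], s, rfl⟩, .inl ⟨fun h => hyw h.1, hwy⟩⟩

theorem exists_separating_parents (hdag : AcyclicParents pa) {x y : V} (hxy : x ≠ y)
    (hnadj : ¬ adjacent pa x y) : ∃ Z : Finset V, x ∉ Z ∧ y ∉ Z ∧ DSep pa Z x y := by
  by_cases hyx : Relation.ReflTransGen (edgeOf pa) y x
  · have hxy' : ¬ Relation.ReflTransGen (edgeOf pa) x y :=
      fun h => hxy (hdag.eq_of_reflTransGen h hyx)
    exact ⟨pa x, hdag.notMem_parents_of_reflTransGen .refl, fun h => hnadj (.inr h),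
      dsep_parents_of_not_adjacent hdag hnadj hxy'⟩
  · exact ⟨pa y, fun h => hnadj (.inl h), hdag.notMem_parents_of_reflTransGen .refl,
      (dsep_parents_of_not_adjacent hdag (mt adjacent_comm.mp hnadj) hyx).symm⟩

end

theorem adjacent_iff_no_separating_set_general (P : (V → S) → ℝ) (pa : V → Finset V)
    (hdag : AcyclicParents pa) (hfaith : Faithful P pa) :
    ∀ x y : V, x ≠ y →
      (adjacent pa x y ↔ ¬ ∃ Z : Finset V, x ∉ Z ∧ y ∉ Z ∧ CondIndepOn P x y Z) := by
  intro x y hxy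
  constructor
  · rintro hadj ⟨Z, hxZ, hyZ, hci⟩
    exact not_dsep_of_adjacent hxy hadj ((hfaith x y Z hxy hxZ hyZ).mp hci)
  · refine not_imp_comm.mp fun hnadj => ?_
    obtain ⟨Z, hxZ, hyZ, hsep⟩ := exists_separating_parents hdag hxy hnadj
    exact ⟨Z, hxZ, hyZ, (hfaith x y Z hxy hxZ hyZ).mpr hsep⟩

/-- Under faithfulness, two nodes are adjacent in the DAG iff there is no subset
`Z ⊆ V \ {x, y}` rendering them conditionally independent. -/
theorem adjacent_iff_no_separating_set (P : (V → S) → ℝ) (pa : V → Finset V)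
    (hP : IsPMF P) (hdag : AcyclicParents pa) (hfaith : Faithful P pa) :
    ∀ x y : V, x ≠ y →
      (adjacent pa x y ↔ ¬ ∃ Z : Finset V, x ∉ Z ∧ y ∉ Z ∧ CondIndepOn P x y Z) :=
  adjacent_iff_no_separating_set_general P pa hdag hfaith
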